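/- arXiv:1801.07927 — 8 statements merged into one kernel-verified Lean document; each statement's English description precedes it below -/
import Mathlib

section
/- Suppose {Π_j^A}_{j=1}^{m_A} and {Π_j^B}_{j=1}^{m_B} are tight rank-one IC-POVMs on ℂ^{D_A} and ℂ^{D_B} with D_A, D_B ≥ 2. Then the product POVM {Π_j^A ⊗ Π_k^B}_{j,k}, with m = m_A m_B outcomes, is an IC-POVM on ℂ^{D_A D_B} but it is not a tight IC-POVM; i.e., the tight reconstruction formula ρ = (m(D_AD_B+1)/(D_AD_B)) Σ p_{jk} Π_j^A⊗Π_k^B − I fails for some density matrix ρ. -/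
open Matrix BigOperators Finset Kronecker
open scoped ComplexOrder

noncomputable section

/-- The rank-one projector `|v⟩⟨v|`. -/
def proj {n : Type*} [Fintype n] (v : n → ℂ) : Matrix n n ℂ :=
  Matrix.of fun a b => v a * star (v b)

/-- The inner product `⟨v|w⟩` on `n → ℂ`. -/
def inner' {n : Type*} [Fintype n] (v w : n → ℂ) : ℂ := ∑ i, star (v i) * w i

/-- A density matrix: positive semidefinite with unit trace. -/
def IsDensity {n : Type*} [Fintype n] [DecidableEq n] (ρ : Matrix n n ℂ) : Prop :=
  ρ.PosSemidef ∧ ρ.trace = 1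

/-!
Tightness on density matrices extends by linearity, since density matrices span all matrices, to
the frame identity `c • ∑ j, tr(X Π_j) • Π_j = X + tr X • 1` for every matrix `X`. With
`∑ j, Π_j = 1` it shows that the `Π_j` span all matrices; hence so do the products
`Π_j^A ⊗ Π_k^B`, and the outcome probabilities determine `ρ`.

On a product state `ρ_A ⊗ ρ_B` the product frame sum factorises into the two single-system frame
sums, i.e. into multiples of `(ρ_A + 1) ⊗ (ρ_B + 1)`. For basis states `ρ_A = |a⟩⟨a|`,
`ρ_B = |b⟩⟨b|` its diagonal entries at `(a, b)` and `(a', b')` are in ratio `4 : 1`, while those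
of `ρ_A ⊗ ρ_B + 1` are in ratio `2 : 1`, so no constant makes the tight formula hold.
-/

def IsTightFrame {n ι : Type*} [Fintype n] [DecidableEq n] [Fintype ι] (c : ℂ)
    (P : ι → Matrix n n ℂ) : Prop :=
  ∀ ρ, IsDensity ρ → ρ = c • ∑ j, (ρ * P j).trace • P j - 1

section

variable {n : Type*} [Fintype n] [DecidableEq n]

theorem isDensity_single (a : n) : IsDensity (single a a (1 : ℂ)) :=
  ⟨diagonal_single a (1 : ℂ) ▸ PosSemidef.diagonal (Pi.single_nonneg.mpr zero_le_one),
    trace_single_eq_same a 1⟩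

open scoped MatrixOrder Matrix.Norms.L2Operator in
theorem span_posSemidef_eq_top : Submodule.span ℂ {A : Matrix n n ℂ | A.PosSemidef} = ⊤ := by
  simpa only [nonneg_iff_posSemidef] using CStarAlgebra.span_nonneg (A := Matrix n n ℂ)

theorem span_isDensity_eq_top : Submodule.span ℂ {ρ : Matrix n n ℂ | IsDensity ρ} = ⊤ := by
  rw [eq_top_iff, ← span_posSemidef_eq_top, Submodule.span_le]
  intro A hA
  by_cases ht : A.trace = 0
  · rw [hA.trace_eq_zero_iff.mp ht]
    exact zero_mem _
  · have hρ : IsDensity (A.trace⁻¹ • A) :=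
      ⟨hA.smul (inv_nonneg.mpr hA.trace_nonneg),
        by rw [trace_smul, smul_eq_mul, inv_mul_cancel₀ ht]⟩
    rw [← smul_inv_smul₀ ht A]
    exact Submodule.smul_mem _ _ (Submodule.subset_span hρ)

namespace IsTightFrame

variable {ι : Type*} [Fintype ι] {c : ℂ} {P : ι → Matrix n n ℂ}

theorem smul_sum_trace_mul_smul (h : IsTightFrame c P) (X : Matrix n n ℂ) :
    c • ∑ j, (X * P j).trace • P j = X + X.trace • 1 := by
  let F : Matrix n n ℂ →ₗ[ℂ] Matrix n n ℂ :=
    c • ∑ j, (traceLinearMap n ℂ ℂ ∘ₗ LinearMap.mulRight ℂ (P j)).smulRight (P j)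
  let G : Matrix n n ℂ →ₗ[ℂ] Matrix n n ℂ :=
    LinearMap.id + (traceLinearMap n ℂ ℂ).smulRight 1
  have hFG : F = G := LinearMap.ext_on span_isDensity_eq_top fun ρ hρ => by
    simp [F, G, hρ.2, sub_eq_iff_eq_add.mp (h ρ hρ).symm]
  simpa [F, G] using LinearMap.congr_fun hFG X

theorem span_range_eq_top (h : IsTightFrame c P) (hsum : ∑ j, P j = 1) :
    Submodule.span ℂ (Set.range P) = ⊤ := by
  refine Submodule.eq_top_iff'.mpr fun X => ?_
  have hX : X = c • ∑ j, (X * P j).trace • P j - X.trace • ∑ j, P j := by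
    rw [h.smul_sum_trace_mul_smul, hsum, add_sub_cancel_right]
  have hP (j : ι) : P j ∈ Submodule.span ℂ (Set.range P) := Submodule.subset_span ⟨j, rfl⟩
  rw [hX]
  exact sub_mem (Submodule.smul_mem _ _ (sum_mem fun j _ => Submodule.smul_mem _ _ (hP j)))
    (Submodule.smul_mem _ _ (sum_mem fun j _ => hP j))

end IsTightFrame

end

theorem eq_of_trace_mul_kronecker_eq {R m n ι κ : Type*} [CommRing R] [Fintype m] [Fintype n]
    [DecidableEq m] [DecidableEq n] {A : ι → Matrix m m R} {B : κ → Matrix n n R}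
    (hA : Submodule.span R (Set.range A) = ⊤) (hB : Submodule.span R (Set.range B) = ⊤)
    {ρ σ : Matrix (m × n) (m × n) R}
    (h : ∀ i j, (ρ * (A i ⊗ₖ B j)).trace = (σ * (A i ⊗ₖ B j)).trace) : ρ = σ := by
  let T (τ : Matrix (m × n) (m × n) R) : Matrix m m R →ₗ[R] Matrix n n R →ₗ[R] R :=
    (kroneckerBilinear (R := R) (α := R)).compr₂
      (traceLinearMap (m × n) R R ∘ₗ LinearMap.mulLeft R τ)
  have hT : T ρ = T σ := LinearMap.ext_on_range hA fun i => LinearMap.ext_on_range hB (h i)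
  have hk (X : Matrix m m R) (Y : Matrix n n R) : kroneckerBilinear (R := R) X Y = X ⊗ₖ Y := rfl
  ext ⟨i, k⟩ ⟨j, l⟩
  simpa [T, hk, single_kronecker_single, trace_mul_single] using
    LinearMap.congr_fun₂ hT (single j i 1) (single l k 1)

theorem sum_sum_trace_mul_kronecker_smul {m n ι κ : Type*} [Fintype m] [Fintype n] [Fintype ι]
    [Fintype κ] (ρA : Matrix m m ℂ) (ρB : Matrix n n ℂ) (PA : ι → Matrix m m ℂ)
    (PB : κ → Matrix n n ℂ) :
    ∑ j, ∑ k, ((ρA ⊗ₖ ρB) * (PA j ⊗ₖ PB k)).trace • (PA j ⊗ₖ PB k) =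
      (∑ j, (ρA * PA j).trace • PA j) ⊗ₖ ∑ k, (ρB * PB k).trace • PB k := by
  simp_rw [← mul_kronecker_mul, trace_kronecker]
  ext ⟨a, b⟩ ⟨c, d⟩
  simp only [kronecker_apply, Matrix.sum_apply, Matrix.smul_apply, smul_eq_mul,
    Finset.sum_mul_sum]
  exact Finset.sum_congr rfl fun j _ => Finset.sum_congr rfl fun k _ => by ring

theorem IsTightFrame.kronecker_not_tight {m n ι κ : Type*} [Fintype m] [DecidableEq m]
    [Fintype n] [DecidableEq n] [Fintype ι] [Fintype κ] {cA cB : ℂ} {PA : ι → Matrix m m ℂ}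
    {PB : κ → Matrix n n ℂ} (hA : IsTightFrame cA PA) (hB : IsTightFrame cB PB)
    {a a' : m} (ha : a ≠ a') {b b' : n} (hb : b ≠ b') (c : ℂ) :
    ¬ ∀ ρ, IsDensity ρ →
      ρ = c • ∑ j, ∑ k, (ρ * (PA j ⊗ₖ PB k)).trace • (PA j ⊗ₖ PB k) - 1 := by
  intro hAB
  have hρ : IsDensity (single a a (1 : ℂ) ⊗ₖ single b b 1) := by
    rw [single_kronecker_single, one_mul]
    exact isDensity_single (a, b)
  have hAB := hAB _ hρ
  rw [sum_sum_trace_mul_kronecker_smul] at hAB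
  have hA := hA _ (isDensity_single a)
  have hB := hB _ (isDensity_single b)
  set SA := ∑ j, (single a a 1 * PA j).trace • PA j
  set SB := ∑ k, (single b b 1 * PB k).trace • PB k
  have eA := congr_fun₂ hA a a
  have eA' := congr_fun₂ hA a' a'
  have eB := congr_fun₂ hB b b
  have eB' := congr_fun₂ hB b' b'
  have eAB := congr_fun₂ hAB (a, b) (a, b)
  have eAB' := congr_fun₂ hAB (a', b') (a', b')
  simp only [single_apply_same, Matrix.sub_apply, Matrix.smul_apply, smul_eq_mul, one_apply_eq,
    ha, hb, and_self, not_false_eq_true, single_apply_of_ne, kroneckerMap_apply, mul_one,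
    mul_zero] at eA eA' eB eB' eAB eAB'
  -- `cA cB c · SA a a · SB b b · SA a' a' · SB b' b'` evaluates to `2 · 2 · 1` one way
  -- and to `1 · 1 · 2` the other way.
  have : (2 : ℂ) = 0 := by
    linear_combination (cB * SB b b) * (c * SA a' a' * SB b' b') * eA
      + 2 * (c * SA a' a' * SB b' b') * eB + 4 * eAB'
      - (cB * SB b' b') * (c * SA a a * SB b b) * eA' - (c * SA a a * SB b b) * eB' - eAB
  norm_num at this

theorem stmt_2_general (DA DB mA mB : ℕ) (hDA : 2 ≤ DA) (hDB : 2 ≤ DB)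
    (PA : Fin mA → Matrix (Fin DA) (Fin DA) ℂ) (PB : Fin mB → Matrix (Fin DB) (Fin DB) ℂ)
    (hsumA : ∑ j, PA j = 1) (hsumB : ∑ k, PB k = 1)
    (htightA : ∀ ρ : Matrix (Fin DA) (Fin DA) ℂ, IsDensity ρ →
      ρ = (((mA : ℂ) * ((DA : ℂ) + 1))/(DA : ℂ)) • ∑ j, (ρ * PA j).trace • PA j - 1)
    (htightB : ∀ ρ : Matrix (Fin DB) (Fin DB) ℂ, IsDensity ρ →
      ρ = (((mB : ℂ) * ((DB : ℂ) + 1))/(DB : ℂ)) • ∑ k, (ρ * PB k).trace • PB k - 1) :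
    -- the product POVM is informationally complete …
    (∀ ρ σ : Matrix (Fin DA × Fin DB) (Fin DA × Fin DB) ℂ, IsDensity ρ → IsDensity σ →
      (∀ j k, (ρ * (PA j ⊗ₖ PB k)).trace = (σ * (PA j ⊗ₖ PB k)).trace) → ρ = σ)
    -- … but the tight reconstruction formula fails for some density matrix
    ∧ ¬ (∀ ρ : Matrix (Fin DA × Fin DB) (Fin DA × Fin DB) ℂ, IsDensity ρ →
      ρ = (((mA : ℂ) * (mB : ℂ) * ((DA : ℂ) * (DB : ℂ) + 1))/((DA : ℂ) * (DB : ℂ))) •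
            ∑ j, ∑ k, (ρ * (PA j ⊗ₖ PB k)).trace • (PA j ⊗ₖ PB k) - 1) := by
  have hA : IsTightFrame _ PA := htightA
  have hB : IsTightFrame _ PB := htightB
  refine ⟨fun _ _ _ _ => ?_, ?_⟩
  · exact eq_of_trace_mul_kronecker_eq (hA.span_range_eq_top hsumA) (hB.span_range_eq_top hsumB)
  · exact hA.kronecker_not_tight hB (a := ⟨0, by omega⟩) (a' := ⟨1, by omega⟩)
      (Fin.ne_of_val_ne zero_ne_one) (b := ⟨0, by omega⟩) (b' := ⟨1, by omega⟩)
      (Fin.ne_of_val_ne zero_ne_one) _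

/-- Proposition 2 (product POVMs): the tensor product of two tight rank-one IC-POVMs is
informationally complete but is not a tight IC-POVM. -/
theorem stmt_2 (DA DB mA mB : ℕ) (hDA : 2 ≤ DA) (hDB : 2 ≤ DB) (hmA : 0 < mA) (hmB : 0 < mB)
    (φA : Fin mA → Fin DA → ℂ) (φB : Fin mB → Fin DB → ℂ)
    (hA1 : ∀ j, inner' (φA j) (φA j) = 1) (hB1 : ∀ k, inner' (φB k) (φB k) = 1)
    (PA : Fin mA → Matrix (Fin DA) (Fin DA) ℂ) (PB : Fin mB → Matrix (Fin DB) (Fin DB) ℂ)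
    (hPA : ∀ j, PA j = ((DA : ℂ)/(mA : ℂ)) • proj (φA j))
    (hPB : ∀ k, PB k = ((DB : ℂ)/(mB : ℂ)) • proj (φB k))
    (hsumA : ∑ j, PA j = 1) (hsumB : ∑ k, PB k = 1)
    (htightA : ∀ ρ : Matrix (Fin DA) (Fin DA) ℂ, IsDensity ρ →
      ρ = (((mA : ℂ) * ((DA : ℂ) + 1))/(DA : ℂ)) • ∑ j, (ρ * PA j).trace • PA j - 1)
    (htightB : ∀ ρ : Matrix (Fin DB) (Fin DB) ℂ, IsDensity ρ →
      ρ = (((mB : ℂ) * ((DB : ℂ) + 1))/(DB : ℂ)) • ∑ k, (ρ * PB k).trace • PB k - 1) :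
    -- the product POVM is informationally complete …
    (∀ ρ σ : Matrix (Fin DA × Fin DB) (Fin DA × Fin DB) ℂ, IsDensity ρ → IsDensity σ →
      (∀ j k, (ρ * (PA j ⊗ₖ PB k)).trace = (σ * (PA j ⊗ₖ PB k)).trace) → ρ = σ)
    -- … but the tight reconstruction formula fails for some density matrix
    ∧ ¬ (∀ ρ : Matrix (Fin DA × Fin DB) (Fin DA × Fin DB) ℂ, IsDensity ρ →
      ρ = (((mA : ℂ) * (mB : ℂ) * ((DA : ℂ) * (DB : ℂ) + 1))/((DA : ℂ) * (DB : ℂ))) •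
            ∑ j, ∑ k, (ρ * (PA j ⊗ₖ PB k)).trace • (PA j ⊗ₖ PB k) - 1) :=
  stmt_2_general DA DB mA mB hDA hDB PA PB hsumA hsumB htightA htightB
end
end

section
/- There is no tight rank-one IC-POVM on ℂ^{d^N} (N ≥ 2 parties, local dimension d ≥ 2) all of whose defining unit vectors are k-uniform states for some fixed k ≥ 1; i.e., if every |φ_j⟩ has every k-party reduced density matrix equal to (1/d^k)I, the reconstruction formula fails for some density matrix. -/
open Matrix BigOperators Finset Kronecker
open scoped ComplexOrder

noncomputable section

/-- Combine an assignment on a subset `S` of parties with one on its complement. -/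
def combine {N d : ℕ} (S : Finset (Fin N)) (x : {i // i ∈ S} → Fin d)
    (z : {i // i ∉ S} → Fin d) : Fin N → Fin d :=
  fun i => if h : i ∈ S then x ⟨i, h⟩ else z ⟨i, h⟩

/-- Partial trace of a multipartite matrix onto the subset `S` of parties. -/
def reduce {N d : ℕ} (S : Finset (Fin N)) (M : Matrix (Fin N → Fin d) (Fin N → Fin d) ℂ) :
    Matrix ({i // i ∈ S} → Fin d) ({i // i ∈ S} → Fin d) ℂ :=
  Matrix.of fun x y => ∑ z : {i // i ∉ S} → Fin d, M (combine S x z) (combine S y z)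

/-- A `k`-uniform pure state: every reduction to `k` parties is maximally mixed. -/
def kUniform {N d : ℕ} (k : ℕ) (v : (Fin N → Fin d) → ℂ) : Prop :=
  ∀ S : Finset (Fin N), S.card = k → reduce S (proj v) = ((1:ℂ)/(d^k : ℂ)) • 1

/-- A fully separable (product) multipartite pure state. -/
def FullySep {N d : ℕ} (v : (Fin N → Fin d) → ℂ) : Prop :=
  ∃ w : Fin N → Fin d → ℂ, ∀ x, v x = ∏ i, w i (x i)

/-!
Fix a set `S` of `k` parties and let `ρ = |0⟩⟨0|_S ⊗ I/d^(N-k)` be the maximally mixed state on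
the basis states that are `0` on `S`. For every `k`-uniform `φ_j`, `Tr(ρ |φ_j⟩⟨φ_j|)` is the
`(0,0)` entry of the `S`-reduction divided by `d^(N-k)`, i.e. `1/d^N`, so `Tr(ρ Π_j) = 1/m` for all
`j`. The reconstruction formula then returns `I/d^N`, which differs from `ρ` since `k ≥ 1`.
-/

section Fiber

variable {N d : ℕ}

/-- `|x⟩⟨x|_S ⊗ I_{Sᶜ}`: the diagonal projector onto basis states agreeing with `x` on `S`. -/
def fiberProj (S : Finset (Fin N)) (x : {i // i ∈ S} → Fin d) :
    Matrix (Fin N → Fin d) (Fin N → Fin d) ℂ :=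
  diagonal fun a => if (fun i : {i // i ∈ S} => a i) = x then 1 else 0

lemma trace_fiberProj_mul (S : Finset (Fin N)) (x : {i // i ∈ S} → Fin d)
    (M : Matrix (Fin N → Fin d) (Fin N → Fin d) ℂ) :
    (fiberProj S x * M).trace = reduce S M x x := by
  let e := Equiv.piEquivPiSubtypeProd (· ∈ S) fun _ : Fin N => Fin d
  have hfst : ∀ p, (fun i : {i // i ∈ S} => e.symm p i) = p.1 := fun p =>
    congrArg Prod.fst (e.apply_symm_apply p)
  rw [trace, ← e.symm.sum_comp, Fintype.sum_prod_type, Finset.sum_eq_single x]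
  · simp only [fiberProj, diag_apply, diagonal_mul, hfst, if_true, one_mul]
    rfl
  · intro y _ hy
    simp only [fiberProj, diag_apply, diagonal_mul, hfst, if_neg hy, zero_mul, sum_const_zero]
  · simp

lemma trace_fiberProj (S : Finset (Fin N)) (x : {i // i ∈ S} → Fin d) :
    (fiberProj S x).trace = (d : ℂ) ^ (N - S.card) := by
  rw [← mul_one (fiberProj S x), trace_fiberProj_mul]
  simp [reduce]

lemma fiberProj_posSemidef (S : Finset (Fin N)) (x : {i // i ∈ S} → Fin d) :
    (fiberProj S x).PosSemidef := by
  refine posSemidef_diagonal_iff.mpr fun a => ?_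
  split_ifs <;> norm_num

def fiberState (S : Finset (Fin N)) (x : {i // i ∈ S} → Fin d) :
    Matrix (Fin N → Fin d) (Fin N → Fin d) ℂ :=
  ((d : ℂ) ^ (N - S.card))⁻¹ • fiberProj S x

lemma isDensity_fiberState (hd : d ≠ 0) (S : Finset (Fin N)) (x : {i // i ∈ S} → Fin d) :
    IsDensity (fiberState S x) := by
  refine ⟨(fiberProj_posSemidef S x).smul (by positivity), ?_⟩
  rw [fiberState, trace_smul, trace_fiberProj, smul_eq_mul,
    inv_mul_cancel₀ (pow_ne_zero _ (Nat.cast_ne_zero.mpr hd))]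

lemma fiberState_apply_self (S : Finset (Fin N)) (a : Fin N → Fin d) :
    fiberState S (fun i => a i) a a = ((d : ℂ) ^ (N - S.card))⁻¹ := by
  simp [fiberState, fiberProj]

lemma trace_fiberState_mul_proj {k : ℕ} (hkN : k ≤ N) {S : Finset (Fin N)} (hS : S.card = k)
    (x : {i // i ∈ S} → Fin d) {v : (Fin N → Fin d) → ℂ} (hv : kUniform k v) :
    (fiberState S x * proj v).trace = ((d : ℂ) ^ N)⁻¹ := by
  rw [fiberState, smul_mul, trace_smul, trace_fiberProj_mul, hv S hS, hS]
  simp only [Matrix.smul_apply, one_apply_eq, smul_eq_mul, mul_one, one_div]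
  rw [← mul_inv, ← pow_add, Nat.sub_add_cancel hkN]

end Fiber

lemma reconstruction_eq_of_trace_eq {n ι : Type*} [Fintype n] [DecidableEq n] [Fintype ι]
    {c D : ℂ} (hc : c ≠ 0) (hD : D ≠ 0) (P : ι → Matrix n n ℂ) (hsum : ∑ j, P j = 1)
    (ρ : Matrix n n ℂ) (hρ : ∀ j, (ρ * P j).trace = c⁻¹) :
    (c * (D + 1) / D) • ∑ j, (ρ * P j).trace • P j - 1 = D⁻¹ • 1 := by
  simp_rw [hρ, ← smul_sum, hsum, smul_smul]
  rw [show c * (D + 1) / D * c⁻¹ = 1 + D⁻¹ by field_simp, add_smul, one_smul, add_sub_cancel_left]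

theorem stmt_4_general (N d k m : ℕ) (hd : 2 ≤ d) (hk : 1 ≤ k) (hkN : k ≤ N) (hm : 0 < m)
    (φ : Fin m → (Fin N → Fin d) → ℂ)
    (hkuni : ∀ j, kUniform k (φ j))
    (P : Fin m → Matrix (Fin N → Fin d) (Fin N → Fin d) ℂ)
    (hP : ∀ j, P j = (((d : ℂ)^N)/(m : ℂ)) • proj (φ j))
    (hsum : ∑ j, P j = 1) :
    ¬ (∀ ρ : Matrix (Fin N → Fin d) (Fin N → Fin d) ℂ, IsDensity ρ →
      ρ = (((m : ℂ) * ((d : ℂ)^N + 1))/((d : ℂ)^N)) • ∑ j, (ρ * P j).trace • P j - 1) := by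
  intro H
  obtain ⟨S, -, hS⟩ := exists_subset_card_eq (s := (univ : Finset (Fin N))) (by simpa using hkN)
  let a : Fin N → Fin d := fun _ => ⟨0, by omega⟩
  have hD : (d : ℂ) ^ N ≠ 0 := pow_ne_zero _ (by exact_mod_cast (by omega : d ≠ 0))
  have hmC : (m : ℂ) ≠ 0 := by exact_mod_cast hm.ne'
  have htr : ∀ j, (fiberState S (fun i => a i) * P j).trace = (m : ℂ)⁻¹ := fun j => by
    rw [hP, Matrix.mul_smul, trace_smul, trace_fiberState_mul_proj hkN hS _ (hkuni j), smul_eq_mul]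
    field_simp
  have hρ := (H _ (isDensity_fiberState (by omega) S _)).trans
    (reconstruction_eq_of_trace_eq hmC hD P hsum _ htr)
  have hdiag := congrFun₂ hρ a a
  rw [fiberState_apply_self, Matrix.smul_apply, one_apply_eq, smul_eq_mul, mul_one,
    _root_.inv_inj, hS] at hdiag
  exact (Nat.pow_lt_pow_right hd (show N - k < N by omega)).ne (by exact_mod_cast hdiag)

/-- Proposition 3: a tight rank-one IC-POVM on `N` qudits cannot be composed exclusively
of `k`-uniform states: the reconstruction formula must fail for some density matrix. -/
theorem stmt_4 (N d k m : ℕ) (hN : 2 ≤ N) (hd : 2 ≤ d) (hk : 1 ≤ k) (hkN : k ≤ N) (hm : 0 < m)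
    (φ : Fin m → (Fin N → Fin d) → ℂ) (hunit : ∀ j, inner' (φ j) (φ j) = 1)
    (hkuni : ∀ j, kUniform k (φ j))
    (P : Fin m → Matrix (Fin N → Fin d) (Fin N → Fin d) ℂ)
    (hP : ∀ j, P j = (((d : ℂ)^N)/(m : ℂ)) • proj (φ j))
    (hsum : ∑ j, P j = 1) :
    ¬ (∀ ρ : Matrix (Fin N → Fin d) (Fin N → Fin d) ℂ, IsDensity ρ →
      ρ = (((m : ℂ) * ((d : ℂ)^N + 1))/((d : ℂ)^N)) • ∑ j, (ρ * P j).trace • P j - 1) :=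
  stmt_4_general N d k m hd hk hkN hm φ hkuni P hP hsum
end
end

section
/- Let φ_1,…,φ_m be unit vectors in (ℂ^d)^{⊗N} forming a complex projective 2-design, let k ≤ N/2, and fix a subset X of parties with |X| = k. Suppose m_sep of the vectors are product across the cut X|X̄ (so their reduction to X is pure) and the remaining m − m_sep vectors have maximally mixed reduction on X. Then m_sep(d^N + 1) = m(d^k + 1). -/
open Matrix BigOperators Finset Kronecker
open scoped ComplexOrder

noncomputable section

/-- The swap operator on `ℂ^n ⊗ ℂ^n`. -/
def swapM (n : Type*) [Fintype n] [DecidableEq n] : Matrix (n × n) (n × n) ℂ :=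
  Matrix.of fun p q => if p.1 = q.2 ∧ p.2 = q.1 then 1 else 0

/-- A complex projective 2-design: the averaged two-fold tensor power of the projectors
equals the normalized projector onto the symmetric subspace, `(I + SWAP)/(D(D+1))`. -/
def TwoDesign {n : Type*} [Fintype n] [DecidableEq n] {m : ℕ} (φ : Fin m → n → ℂ) : Prop :=
  (1/(m:ℂ)) • ∑ j, (proj (φ j)) ⊗ₖ (proj (φ j)) =
    (1/((Fintype.card n : ℂ) * (Fintype.card n + 1))) • (1 + swapM n)


namespace Aux
variable {N d : ℕ} (X : Finset (Fin N))

lemma combine_mem (x : {i // i ∈ X} → Fin d) (z : {i // i ∉ X} → Fin d)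
    (i : {i // i ∈ X}) : combine X x z i.1 = x i := by
  simp [combine, i.2]

lemma combine_not_mem (x : {i // i ∈ X} → Fin d) (z : {i // i ∉ X} → Fin d)
    (i : {i // i ∉ X}) : combine X x z i.1 = z i := by
  simp [combine, i.2]

lemma combine_inj {x x' : {i // i ∈ X} → Fin d} {z z' : {i // i ∉ X} → Fin d}
    (h : combine X x z = combine X x' z') : x = x' ∧ z = z' := by
  constructor
  · funext i
    have := congrFun h i.1
    rwa [combine_mem, combine_mem] at this
  · funext i
    have := congrFun h i.1
    rwa [combine_not_mem, combine_not_mem] at this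

def splitEquiv : (({i // i ∈ X} → Fin d) × ({i // i ∉ X} → Fin d)) ≃ (Fin N → Fin d) where
  toFun p := combine X p.1 p.2
  invFun a := (fun i => a i.1, fun i => a i.1)
  left_inv p := by
    apply Prod.ext
    · funext i; exact combine_mem X _ _ i
    · funext i; exact combine_not_mem X _ _ i
  right_inv a := by
    funext i
    by_cases h : i ∈ X <;> simp [combine, h]

lemma sum_combine (g : (Fin N → Fin d) → ℂ) :
    ∑ a, g a = ∑ x : {i // i ∈ X} → Fin d, ∑ z : {i // i ∉ X} → Fin d, g (combine X x z) := by
  rw [← Equiv.sum_comp (splitEquiv (d := d) X) g, Fintype.sum_prod_type]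
  rfl

def Fn {N d : ℕ} (X : Finset (Fin N))
    (M : Matrix ((Fin N → Fin d) × (Fin N → Fin d)) ((Fin N → Fin d) × (Fin N → Fin d)) ℂ) : ℂ :=
  ∑ x : {i // i ∈ X} → Fin d, ∑ x' : {i // i ∈ X} → Fin d,
    ∑ z : {i // i ∉ X} → Fin d, ∑ z' : {i // i ∉ X} → Fin d,
      M (combine X x z, combine X x' z') (combine X x' z, combine X x z')

lemma Fn_smul (c : ℂ) (M) : Fn (d := d) X (c • M) = c * Fn X M := by
  simp [Fn, Finset.mul_sum]

def FnL {N d : ℕ} (X : Finset (Fin N)) :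
    Matrix ((Fin N → Fin d) × (Fin N → Fin d)) ((Fin N → Fin d) × (Fin N → Fin d)) ℂ →ₗ[ℂ] ℂ where
  toFun := Fn X
  map_add' A B := by simp [Fn, Finset.sum_add_distrib]
  map_smul' c M := by simp [Fn, Finset.mul_sum]

lemma Fn_sum {ι : Type*} [Fintype ι] (M : ι → _) :
    Fn (d := d) X (∑ j, M j) = ∑ j, Fn X (M j) :=
  map_sum (FnL X) M Finset.univ

lemma Fn_add (A B) : Fn (d := d) X (A + B) = Fn X A + Fn X B := by
  simp [Fn, Finset.sum_add_distrib]

lemma Fn_kron (A B : Matrix (Fin N → Fin d) (Fin N → Fin d) ℂ) :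
    Fn X (A ⊗ₖ B) = ∑ x : {i // i ∈ X} → Fin d, ∑ x' : {i // i ∈ X} → Fin d,
      reduce X A x x' * reduce X B x' x := by
  unfold Fn
  congr 1; funext x
  congr 1; funext x'
  rw [reduce, reduce]
  simp only [Matrix.of_apply, kroneckerMap_apply]
  rw [Finset.sum_mul_sum]

lemma Fn_one : Fn (d := d) X 1 =
    (Fintype.card ({i // i ∈ X} → Fin d) : ℂ) * (Fintype.card ({i // i ∉ X} → Fin d) : ℂ)
      * (Fintype.card ({i // i ∉ X} → Fin d) : ℂ) := by
  unfold Fn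
  have key : ∀ (x x' : {i // i ∈ X} → Fin d) (z z' : {i // i ∉ X} → Fin d),
      (1 : Matrix ((Fin N → Fin d) × (Fin N → Fin d)) _ ℂ)
        (combine X x z, combine X x' z') (combine X x' z, combine X x z')
      = if x = x' then 1 else 0 := by
    intro x x' z z'
    rw [Matrix.one_apply]
    by_cases h : x = x'
    · subst h; simp
    · rw [if_neg h, if_neg]
      intro hc
      exact h (combine_inj X (congrArg Prod.fst hc)).1
  simp_rw [key]
  simp [Finset.sum_ite_eq, Finset.sum_const, Finset.card_univ]
  ring

lemma Fn_swap : Fn (d := d) X (swapM _) =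
    (Fintype.card ({i // i ∈ X} → Fin d) : ℂ) * (Fintype.card ({i // i ∈ X} → Fin d) : ℂ)
      * (Fintype.card ({i // i ∉ X} → Fin d) : ℂ) := by
  unfold Fn
  have key : ∀ (x x' : {i // i ∈ X} → Fin d) (z z' : {i // i ∉ X} → Fin d),
      swapM ((Fin N → Fin d))
        (combine X x z, combine X x' z') (combine X x' z, combine X x z')
      = if z = z' then 1 else 0 := by
    intro x x' z z'
    rw [swapM]
    simp only [Matrix.of_apply]
    by_cases h : z = z'
    · subst h; simp
    · rw [if_neg h, if_neg]
      rintro ⟨h1, -⟩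
      exact h (combine_inj X h1).2
  simp_rw [key]
  simp [Finset.sum_ite_eq, Finset.sum_const, Finset.card_univ]
  ring

lemma purity_smul_one {ι : Type*} [Fintype ι] [DecidableEq ι] (c : ℂ) :
    ∑ x : ι, ∑ x' : ι, (c • (1 : Matrix ι ι ℂ)) x x' * (c • (1 : Matrix ι ι ℂ)) x' x
      = (Fintype.card ι : ℂ) * (c * c) := by
  simp [Matrix.smul_apply, Matrix.one_apply, mul_ite, ite_mul, Finset.sum_ite_eq,
    Finset.sum_const, Finset.card_univ]

lemma purity_sep (φv : (Fin N → Fin d) → ℂ) (hu : ∑ a, star (φv a) * φv a = 1)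
    (v : ({i // i ∈ X} → Fin d) → ℂ) (w : ({i // i ∉ X} → Fin d) → ℂ)
    (hv : ∀ x z, φv (combine X x z) = v x * w z) :
    ∑ x, ∑ x', reduce X (proj φv) x x' * reduce X (proj φv) x' x = 1 := by
  set W : ℂ := ∑ z : {i // i ∉ X} → Fin d, w z * star (w z) with hW
  set V : ℂ := ∑ x : {i // i ∈ X} → Fin d, v x * star (v x) with hV
  have hred : ∀ x y, reduce X (proj φv) x y = v x * star (v y) * W := by
    intro x y
    rw [reduce]
    simp only [Matrix.of_apply, proj, hv]
    rw [hW, Finset.mul_sum]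
    refine Finset.sum_congr rfl fun z _ => ?_
    rw [star_mul']
    ring
  have hVW : V * W = 1 := by
    rw [sum_combine X (fun a => star (φv a) * φv a)] at hu
    simp only [hv] at hu
    rw [← hu, hV, hW, Finset.sum_mul_sum]
    refine Finset.sum_congr rfl fun x _ => Finset.sum_congr rfl fun z _ => ?_
    rw [star_mul']
    ring
  simp only [hred]
  calc ∑ x, ∑ x', v x * star (v x') * W * (v x' * star (v x) * W)
      = ∑ x, ∑ x', (v x * star (v x)) * ((v x' * star (v x')) * (W * W)) := by
        refine Finset.sum_congr rfl fun x _ => Finset.sum_congr rfl fun x' _ => by ring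
    _ = ∑ x, (v x * star (v x)) * (V * (W * W)) := by
        refine Finset.sum_congr rfl fun x _ => ?_
        rw [← Finset.mul_sum, ← Finset.sum_mul, hV]
    _ = V * (V * (W * W)) := by rw [← Finset.sum_mul, hV]
    _ = (V * W) * (V * W) := by ring
    _ = 1 := by rw [hVW]; ring

end Aux

open Aux in
/-- Proposition 6 (saturation): if a 2-design consists of `m_sep` vectors that are product
across the cut `X|X̄` and `m - m_sep` vectors whose reduction to `X` is maximally mixed,
then `m_sep(d^N + 1) = m(d^k + 1)`. -/
theorem stmt_6 (N d k m : ℕ) (hd : 2 ≤ d) (hm : 0 < m) (hk : 1 ≤ k) (hk2 : 2 * k ≤ N)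
    (φ : Fin m → (Fin N → Fin d) → ℂ) (hunit : ∀ j, inner' (φ j) (φ j) = 1)
    (hdes : TwoDesign φ)
    (X : Finset (Fin N)) (hX : X.card = k)
    (Sep : Finset (Fin m))
    (hprod : ∀ j ∈ Sep, ∃ (v : ({i // i ∈ X} → Fin d) → ℂ) (w : ({i // i ∉ X} → Fin d) → ℂ),
      ∀ x z, φ j (combine X x z) = v x * w z)
    (hmix : ∀ j ∉ Sep, reduce X (proj (φ j)) = ((1:ℂ)/((d:ℂ)^k)) • 1) :
    Sep.card * (d^N + 1) = m * (d^k + 1) := by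
  classical
  -- cardinalities
  have hkN : k ≤ N := le_trans (Nat.le_mul_of_pos_left k (by norm_num)) hk2
  have hA : (Fintype.card ({i // i ∈ X} → Fin d) : ℂ) = (d:ℂ)^k := by
    rw [Fintype.card_fun, Fintype.card_coe, hX, Fintype.card_fin]
    push_cast; ring
  have hB : (Fintype.card ({i // i ∉ X} → Fin d) : ℂ) = (d:ℂ)^(N - k) := by
    rw [Fintype.card_fun, Fintype.card_subtype_compl, Fintype.card_coe, hX,
      Fintype.card_fin, Fintype.card_fin]
    push_cast; ring
  have hD : (Fintype.card (Fin N → Fin d) : ℂ) = (d:ℂ)^N := by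
    rw [Fintype.card_fun, Fintype.card_fin, Fintype.card_fin]
    push_cast; ring
  have htu : (d:ℂ)^k * (d:ℂ)^(N - k) = (d:ℂ)^N := by
    rw [← pow_add]
    congr 1
    omega
  -- apply the functional to the design equation
  have H := congrArg (Fn X) hdes
  rw [Fn_smul, Fn_smul, Fn_sum, Fn_add, Fn_one, Fn_swap] at H
  simp only [Fn_kron] at H
  -- the purities
  set P : Fin m → ℂ := fun j => ∑ x, ∑ x', reduce X (proj (φ j)) x x' * reduce X (proj (φ j)) x' x
    with hP
  have hPsep : ∀ j ∈ Sep, P j = 1 := by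
    intro j hj
    obtain ⟨v, w, hv⟩ := hprod j hj
    exact purity_sep X (φ j) (hunit j) v w hv
  have hPmix : ∀ j ∈ Sepᶜ, P j = (d:ℂ)^k * ((1/(d:ℂ)^k) * (1/(d:ℂ)^k)) := by
    intro j hj
    rw [hP]
    simp only
    rw [hmix j (Finset.mem_compl.mp hj), purity_smul_one, hA]
  have hsplit : ∑ j, P j = (Sep.card : ℂ) + (Sepᶜ.card : ℂ) * ((d:ℂ)^k * ((1/(d:ℂ)^k) * (1/(d:ℂ)^k))) := by
    rw [← Finset.sum_add_sum_compl Sep P, Finset.sum_congr rfl hPsep,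
      Finset.sum_congr rfl hPmix, Finset.sum_const, Finset.sum_const]
    simp [mul_comm]
  rw [hsplit, hA, hB, hD] at H
  -- nonzero facts
  have hd0 : (d:ℂ) ≠ 0 := by
    simp only [ne_eq, Nat.cast_eq_zero]; omega
  have ht0 : (d:ℂ)^k ≠ 0 := pow_ne_zero _ hd0
  have hm0 : (m:ℂ) ≠ 0 := by
    simp only [ne_eq, Nat.cast_eq_zero]; omega
  have hDn0 : (d:ℂ)^N ≠ 0 := pow_ne_zero _ hd0
  have hD1 : (d:ℂ)^N + 1 ≠ 0 := by
    have : ((d^N + 1 : ℕ) : ℂ) ≠ 0 := by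
      simp only [ne_eq, Nat.cast_eq_zero]; positivity
    push_cast at this
    convert this using 2
  have ht1 : (d:ℂ)^k - 1 ≠ 0 := by
    have h2 : 2 ≤ d^k := by
      calc 2 = 2^1 := by norm_num
      _ ≤ d^k := Nat.pow_le_pow_left hd k |>.trans' (by
        exact Nat.pow_le_pow_right (by omega) hk) 
    intro hc
    have : (d:ℂ)^k = 1 := by linear_combination hc
    have : ((d^k : ℕ) : ℂ) = ((1 : ℕ) : ℂ) := by push_cast; exact this
    have := Nat.cast_injective this
    omega
  have hSC : (Sep.card : ℂ) + (Sepᶜ.card : ℂ) = m := by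
    have := Finset.card_add_card_compl Sep
    rw [Fintype.card_fin] at this
    exact_mod_cast this
  -- final algebra
  have key : (Sep.card : ℂ) * ((d:ℂ)^N + 1) = (m : ℂ) * ((d:ℂ)^k + 1) := by
    have hcancel2 : (d:ℂ)^N * (((d:ℂ)^k - 1) * ((Sep.card : ℂ) * ((d:ℂ)^N + 1)))
        = (d:ℂ)^N * (((d:ℂ)^k - 1) * ((m : ℂ) * ((d:ℂ)^k + 1))) := by
      field_simp at H
      linear_combination H - ((d:ℂ)^N * ((d:ℂ)^N + 1)) * hSC
        + ((m:ℂ) * ((d:ℂ)^N + (d:ℂ)^k * (d:ℂ)^(N-k) + (d:ℂ)^k * (d:ℂ)^k)) * htu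
    exact mul_left_cancel₀ ht1 (mul_left_cancel₀ hDn0 hcancel2)
  exact_mod_cast key
end
end

section
/- Let φ_1,…,φ_m be unit vectors in (ℂ^d)^{⊗N} forming a complex projective 2-design, with k ≤ N/2 and X a subset of parties with |X| = k. If m_sep of the vectors have pure reduction on X (purity 1) and at least one of the remaining vectors has maximally mixed reduction on X (purity 1/d^k), then m_sep(d^N + 1) ≤ m(d^k + 1). -/
open Matrix BigOperators Finset Kronecker
open scoped ComplexOrder

noncomputable section

/-!
Applying `M ↦ Tr[M F_X]`, with `F_X` the swap of the `X`-parts of two copies, to the 2-design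
identity gives the total purity of the reductions to `X`:
`∑ⱼ Tr ρⱼ² = m (d^k + d^(N-k)) / (d^N + 1)`. Each purity is `1` on `Sep` and at least `1/d^k`
everywhere (Cauchy–Schwarz on the diagonal of the unit-trace `ρⱼ`), so
`|Sep| + (m - |Sep|)/d^k ≤ m (d^k + d^(N-k)) / (d^N + 1)`, which rearranges to
`(d^k - 1) |Sep| (d^N + 1) ≤ (d^k - 1) m (d^k + 1)`.
-/

namespace Matrix

variable {n : Type*} [Fintype n]

lemma IsHermitian.trace_mul_self {A : Matrix n n ℂ} (hA : A.IsHermitian) :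
    (A * A).trace = ((∑ i, ∑ j, Complex.normSq (A i j) : ℝ) : ℂ) := by
  simp only [trace, diag, mul_apply, Complex.ofReal_sum]
  refine Fintype.sum_congr _ _ fun i => Fintype.sum_congr _ _ fun j => ?_
  rw [← Complex.mul_conj, ← hA.apply j i]
  rfl

lemma normSq_trace_le (A : Matrix n n ℂ) :
    Complex.normSq A.trace ≤ Fintype.card n * ∑ i, ∑ j, Complex.normSq (A i j) := by
  calc Complex.normSq A.trace = ‖∑ i, A i i‖ ^ 2 := Complex.normSq_eq_norm_sq _
    _ ≤ (∑ i, ‖A i i‖) ^ 2 := by gcongr; exact norm_sum_le _ _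
    _ ≤ Fintype.card n * ∑ i, ‖A i i‖ ^ 2 := sq_sum_le_card_mul_sum_sq
    _ ≤ Fintype.card n * ∑ i, ∑ j, Complex.normSq (A i j) := by
      gcongr with i
      rw [← Complex.normSq_eq_norm_sq]
      exact Finset.single_le_sum (f := fun j => Complex.normSq (A i j))
        (fun j _ => Complex.normSq_nonneg _) (Finset.mem_univ i)

end Matrix

lemma isHermitian_proj {n : Type*} [Fintype n] (v : n → ℂ) : (proj v).IsHermitian := by
  ext a b
  simp [proj, mul_comm]

section PartialTrace

variable {N d : ℕ}

lemma combine_eq_piEquivPiSubtypeProd_symm (S : Finset (Fin N)) (x : {i // i ∈ S} → Fin d)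
    (z : {i // i ∉ S} → Fin d) :
    combine S x z = (Equiv.piEquivPiSubtypeProd (· ∈ S) fun _ => Fin d).symm (x, z) :=
  rfl

lemma combine_inj (S : Finset (Fin N)) {x y : {i // i ∈ S} → Fin d}
    {z w : {i // i ∉ S} → Fin d} : combine S x z = combine S y w ↔ x = y ∧ z = w := by
  rw [combine_eq_piEquivPiSubtypeProd_symm, combine_eq_piEquivPiSubtypeProd_symm,
    Equiv.apply_eq_iff_eq, Prod.mk.injEq]

lemma sum_combine {M : Type*} [AddCommMonoid M] (S : Finset (Fin N)) (f : (Fin N → Fin d) → M) :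
    ∑ v, f v = ∑ x, ∑ z, f (combine S x z) := by
  rw [← Fintype.sum_prod_type',
    ← (Equiv.piEquivPiSubtypeProd (· ∈ S) fun _ => Fin d).symm.sum_comp]
  rfl

lemma pow_card_mul_pow_sub_card {M : Type*} [Monoid M] (S : Finset (Fin N)) (x : M) :
    x ^ S.card * x ^ (N - S.card) = x ^ N := by
  rw [← pow_add, Nat.add_sub_cancel' (S.card_le_univ.trans_eq (Fintype.card_fin N))]

lemma card_fun_mem (S : Finset (Fin N)) :
    Fintype.card ({i // i ∈ S} → Fin d) = d ^ S.card := by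
  rw [Fintype.card_fun, Fintype.card_fin, Fintype.card_coe]

lemma trace_reduce (S : Finset (Fin N)) (M : Matrix (Fin N → Fin d) (Fin N → Fin d) ℂ) :
    (reduce S M).trace = M.trace := by
  rw [trace, trace, sum_combine S]
  rfl

lemma isHermitian_reduce (S : Finset (Fin N)) {M : Matrix (Fin N → Fin d) (Fin N → Fin d) ℂ}
    (hM : M.IsHermitian) : (reduce S M).IsHermitian := by
  ext x y
  simp only [conjTranspose_apply, reduce, of_apply, star_sum, hM.apply]

def purity (S : Finset (Fin N)) (v : (Fin N → Fin d) → ℂ) : ℝ :=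
  ∑ x, ∑ y, Complex.normSq (reduce S (proj v) x y)

lemma trace_reduce_mul_self (S : Finset (Fin N)) (v : (Fin N → Fin d) → ℂ) :
    (reduce S (proj v) * reduce S (proj v)).trace = purity S v :=
  (isHermitian_reduce S (isHermitian_proj v)).trace_mul_self

lemma one_le_pow_card_mul_purity (S : Finset (Fin N)) {v : (Fin N → Fin d) → ℂ}
    (hv : inner' v v = 1) : 1 ≤ (d : ℝ) ^ S.card * purity S v := by
  have htr : (reduce S (proj v)).trace = 1 := by
    rw [trace_reduce, ← hv, inner', trace]
    simp [proj, mul_comm]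
  have := normSq_trace_le (reduce S (proj v))
  rw [htr, Complex.normSq_one, card_fun_mem] at this
  exact_mod_cast this

/-- `M ↦ Tr[M F_S]`, where `F_S` swaps the `S`-parts of the two tensor factors. -/
def partialSwapTrace (S : Finset (Fin N)) :
    Matrix ((Fin N → Fin d) × (Fin N → Fin d)) ((Fin N → Fin d) × (Fin N → Fin d)) ℂ →ₗ[ℂ] ℂ where
  toFun M := ∑ x, ∑ y, ∑ z, ∑ w, M (combine S x z, combine S y w) (combine S y z, combine S x w)
  map_add' A B := by simp only [Matrix.add_apply, Finset.sum_add_distrib]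
  map_smul' c A := by simp only [Matrix.smul_apply, smul_eq_mul, Finset.mul_sum, RingHom.id_apply]

lemma partialSwapTrace_kronecker (S : Finset (Fin N))
    (A B : Matrix (Fin N → Fin d) (Fin N → Fin d) ℂ) :
    partialSwapTrace S (A ⊗ₖ B) = (reduce S A * reduce S B).trace := by
  simp only [partialSwapTrace, LinearMap.coe_mk, AddHom.coe_mk, kroneckerMap_apply, trace,
    Matrix.diag, mul_apply, reduce, of_apply, Finset.sum_mul_sum]

lemma partialSwapTrace_one (S : Finset (Fin N)) :
    partialSwapTrace (d := d) S 1 = (d : ℂ) ^ S.card * ((d : ℂ) ^ (N - S.card)) ^ 2 := by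
  have hdiag : ∀ (x y : {i // i ∈ S} → Fin d) (z w : {i // i ∉ S} → Fin d),
      (combine S x z = combine S y z ∧ combine S y w = combine S x w) ↔ y = x := by
    simp only [combine_inj]
    tauto
  simp only [partialSwapTrace, LinearMap.coe_mk, AddHom.coe_mk, one_apply, Prod.mk.injEq, hdiag]
  simp [sq]

lemma partialSwapTrace_swapM (S : Finset (Fin N)) :
    partialSwapTrace (d := d) S (swapM _) = ((d : ℂ) ^ S.card) ^ 2 * (d : ℂ) ^ (N - S.card) := by
  have hswap : ∀ (x y : {i // i ∈ S} → Fin d) (z w : {i // i ∉ S} → Fin d),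
      (combine S x z = combine S x w ∧ combine S y w = combine S y z) ↔ w = z := by
    simp only [combine_inj]
    tauto
  simp only [partialSwapTrace, LinearMap.coe_mk, AddHom.coe_mk, swapM, of_apply, hswap]
  simp [sq, mul_assoc]

end PartialTrace

lemma TwoDesign.sum_purity_mul {N d m : ℕ} (hd : d ≠ 0) (hm : m ≠ 0)
    {φ : Fin m → (Fin N → Fin d) → ℂ} (hφ : TwoDesign φ) (S : Finset (Fin N)) :
    (∑ j, purity S (φ j)) * ((d : ℝ) ^ N + 1) =
      m * ((d : ℝ) ^ S.card + (d : ℝ) ^ (N - S.card)) := by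
  have h := congrArg (partialSwapTrace S) hφ
  simp only [map_smul, map_sum, map_add, partialSwapTrace_kronecker, trace_reduce_mul_self,
    partialSwapTrace_one, partialSwapTrace_swapM, Fintype.card_fun, Fintype.card_fin,
    smul_eq_mul, Nat.cast_pow] at h
  have hpow := (pow_card_mul_pow_sub_card S (d : ℂ)).symm
  have hd' : (d : ℂ) ≠ 0 := Nat.cast_ne_zero.mpr hd
  have hm' : (m : ℂ) ≠ 0 := Nat.cast_ne_zero.mpr hm
  apply Complex.ofReal_injective
  push_cast
  rw [hpow] at h ⊢
  field_simp at h
  linear_combination h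

lemma card_mul_le_of_sum_mul_eq {ι : Type*} [Fintype ι] (s : Finset ι)
    {p : ι → ℝ} {a b : ℝ} (ha : 1 < a) (hb : 0 ≤ b) (hs : ∀ j ∈ s, p j = 1)
    (hp : ∀ j, 1 ≤ a * p j) (hsum : (∑ j, p j) * (a * b + 1) = Fintype.card ι * (a + b)) :
    s.card * (a * b + 1) ≤ Fintype.card ι * (a + 1) := by
  classical
  have hcompl : ((sᶜ.card : ℕ) : ℝ) = Fintype.card ι - s.card := by
    rw [Finset.card_compl, Nat.cast_sub s.card_le_univ]
  have hlow : s.card * a + (Fintype.card ι - s.card) ≤ a * ∑ j, p j := by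
    have hsc : (sᶜ.card : ℝ) ≤ ∑ j ∈ sᶜ, a * p j := by
      simpa using sᶜ.card_nsmul_le_sum _ 1 fun j _ => hp j
    rw [← s.sum_add_sum_compl, mul_add, Finset.sum_congr rfl hs, ← hcompl, Finset.mul_sum sᶜ]
    simpa [mul_comm] using hsc
  have hpos : 0 ≤ a * b + 1 := by positivity
  have key : (a - 1) * (s.card * (a * b + 1)) ≤ (a - 1) * (Fintype.card ι * (a + 1)) := by
    nlinarith [mul_le_mul_of_nonneg_right hlow hpos]
  exact le_of_mul_le_mul_left key (sub_pos.mpr ha)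

theorem stmt_7_general (N d k m : ℕ) (hd : 2 ≤ d) (hm : 0 < m) (hk : 1 ≤ k)
    (φ : Fin m → (Fin N → Fin d) → ℂ) (hunit : ∀ j, inner' (φ j) (φ j) = 1)
    (hdes : TwoDesign φ)
    (X : Finset (Fin N)) (hX : X.card = k)
    (Sep : Finset (Fin m))
    (hpure : ∀ j ∈ Sep, (reduce X (proj (φ j)) * reduce X (proj (φ j))).trace = 1) :
    Sep.card * (d^N + 1) ≤ m * (d^k + 1) := by
  have hpow : (d : ℝ) ^ N = d ^ k * d ^ (N - k) := hX ▸ (pow_card_mul_pow_sub_card X _).symm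
  have hsum := hdes.sum_purity_mul (by omega) hm.ne' X
  rw [hX, hpow] at hsum
  have key := card_mul_le_of_sum_mul_eq Sep (p := fun j => purity X (φ j)) (a := d ^ k)
    (b := d ^ (N - k)) (one_lt_pow₀ (by exact_mod_cast hd) (by omega)) (by positivity)
    (fun j hj => by exact_mod_cast (trace_reduce_mul_self X (φ j)).symm.trans (hpure j hj))
    (fun j => hX ▸ one_le_pow_card_mul_purity X (hunit j))
    (by rwa [Fintype.card_fin])
  rw [← hpow, Fintype.card_fin] at key
  exact_mod_cast key

/-- Proposition 4 (bound): if a 2-design has `m_sep` vectors with pure reduction on `X` and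
at least one remaining vector has maximally mixed reduction on `X`, then
`m_sep(d^N + 1) ≤ m(d^k + 1)`. -/
theorem stmt_7 (N d k m : ℕ) (hd : 2 ≤ d) (hm : 0 < m) (hk : 1 ≤ k) (hk2 : 2 * k ≤ N)
    (φ : Fin m → (Fin N → Fin d) → ℂ) (hunit : ∀ j, inner' (φ j) (φ j) = 1)
    (hdes : TwoDesign φ)
    (X : Finset (Fin N)) (hX : X.card = k)
    (Sep : Finset (Fin m))
    (hpure : ∀ j ∈ Sep, (reduce X (proj (φ j)) * reduce X (proj (φ j))).trace = 1)
    (hmix : ∃ j, j ∉ Sep ∧ reduce X (proj (φ j)) = ((1:ℂ)/((d:ℂ)^k)) • 1) :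
    Sep.card * (d^N + 1) ≤ m * (d^k + 1) :=
  stmt_7_general N d k m hd hm hk φ hunit hdes X hX Sep hpure
end
end

section
/- For every N ≥ 1, d ≥ 2, and 1 ≤ k ≤ N − 1, there is no integer m_sep with 0 ≤ m_sep ≤ d^{2N} satisfying m_sep(d^N + 1) = d^{2N}(d^k + 1); hence nested SIC-POVMs do not exist for any N-qudit system. -/
open Matrix BigOperators Finset Kronecker
open scoped ComplexOrder

noncomputable section

/-- Observation 3 (no nested SIC-POVMs): for `N ≥ 1`, `d ≥ 2` and `1 ≤ k ≤ N - 1` there is no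
integer `m_sep ≤ d^(2N)` with `m_sep(d^N + 1) = d^(2N)(d^k + 1)`. -/
theorem stmt_9 (N d k : ℕ) (hN : 1 ≤ N) (hd : 2 ≤ d) (hk : 1 ≤ k) (hkN : k ≤ N - 1) :
    ¬ ∃ msep : ℕ, msep ≤ d^(2*N) ∧ msep * (d^N + 1) = d^(2*N) * (d^k + 1) := by
  rintro ⟨m, _, hm⟩
  have hkN' : k < N := by omega
  have hco : Nat.Coprime (d^N + 1) (d^(2*N)) := by
    have : Nat.Coprime (d^N + 1) (d^N) := by simp [Nat.Coprime, Nat.gcd_self_add_left]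
    have := this.pow_right 2
    rwa [← pow_mul, mul_comm N 2] at this
  have hdvd : (d^N + 1) ∣ d^(2*N) * (d^k + 1) := ⟨m, by rw [← hm, mul_comm]⟩
  have hdvd2 : (d^N + 1) ∣ (d^k + 1) := hco.dvd_of_dvd_mul_left hdvd
  have hle : d^N + 1 ≤ d^k + 1 := Nat.le_of_dvd (by positivity) hdvd2
  have hlt : d^k < d^N := Nat.pow_lt_pow_right (by omega) hkN'
  omega
end
end

section
/- For fixed N ≥ 2, k = N/2 (N even), and fixed ratio r = m_sep/m ∈ (0,1], the inequality m_sep(d^N + 1) ≤ m(d^{N/2} + 1) fails for all sufficiently large local dimensions d; precisely, it holds iff r(d^N + 1) ≤ d^{N/2} + 1, and there exists d_max such that it fails for all d > d_max. -/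
/-! Writing `x = d^(N/2)`, we have `x² ≤ d^N`, and `x + 1 < r (x² + 1)` as soon as `r x > 2`;
since `x ≥ d`, this holds for every `d > 2 / r`. -/

open Matrix BigOperators Finset Kronecker
open scoped ComplexOrder

noncomputable section

lemma add_one_lt_mul_sq_add_one {r x : ℝ} (hx : 1 ≤ x) (hrx : 2 < r * x) :
    x + 1 < r * (x ^ 2 + 1) := by
  have hr : 0 < r := pos_of_mul_pos_left (by linarith : 0 < r * x) (by linarith)
  nlinarith

lemma pow_div_two_sq_le_pow {d : ℝ} (hd : 1 ≤ d) (N : ℕ) : (d ^ (N / 2)) ^ 2 ≤ d ^ N := by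
  rw [← pow_mul]
  exact pow_le_pow_right₀ hd (Nat.div_mul_le_self N 2)

theorem stmt_17_general (N : ℕ) (hN : 2 ≤ N) (r : ℝ) (hr0 : 0 < r) :
    (∀ (d m : ℕ), 0 < m → ∀ msep : ℝ, msep = r * m →
      ((msep * ((d : ℝ)^N + 1) ≤ (m : ℝ) * ((d : ℝ)^(N/2) + 1)) ↔
        r * ((d : ℝ)^N + 1) ≤ (d : ℝ)^(N/2) + 1))
    ∧ ∃ dmax : ℕ, ∀ d : ℕ, dmax < d → ¬ (r * ((d : ℝ)^N + 1) ≤ (d : ℝ)^(N/2) + 1) := by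
  constructor
  · rintro d m hm _ rfl
    rw [mul_comm r, mul_assoc, mul_le_mul_iff_right₀ (by exact_mod_cast hm)]
  · refine ⟨⌈2 / r⌉₊, fun d hd => not_le.mpr ?_⟩
    have hrd : 2 < r * d := (div_lt_iff₀' hr0).mp (Nat.lt_of_ceil_lt hd)
    have hd1 : (1 : ℝ) ≤ d := Nat.one_le_cast.mpr (Nat.zero_lt_of_lt hd)
    have hdx : (d : ℝ) ≤ (d : ℝ) ^ (N / 2) := le_self_pow₀ hd1 (by omega)
    calc (d : ℝ) ^ (N / 2) + 1
        < r * (((d : ℝ) ^ (N / 2)) ^ 2 + 1) :=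
          add_one_lt_mul_sq_add_one (hd1.trans hdx) (hrd.trans_le (by gcongr))
      _ ≤ r * ((d : ℝ) ^ N + 1) := by gcongr; exact pow_div_two_sq_le_pow hd1 N

/-- Corollary 2: for fixed even `N ≥ 2`, `k = N/2` and a fixed fraction `r = m_sep/m` of
separable elements, the bound `m_sep(d^N+1) ≤ m(d^{N/2}+1)` holds iff `r(d^N+1) ≤ d^{N/2}+1`,
and it fails for all sufficiently large local dimensions `d`. -/
theorem stmt_17 (N : ℕ) (hN : 2 ≤ N) (hNe : Even N) (r : ℝ) (hr0 : 0 < r) (hr1 : r ≤ 1) :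
    (∀ (d m : ℕ), 0 < m → ∀ msep : ℝ, msep = r * m →
      ((msep * ((d : ℝ)^N + 1) ≤ (m : ℝ) * ((d : ℝ)^(N/2) + 1)) ↔
        r * ((d : ℝ)^N + 1) ≤ (d : ℝ)^(N/2) + 1))
    ∧ ∃ dmax : ℕ, ∀ d : ℕ, dmax < d → ¬ (r * ((d : ℝ)^N + 1) ≤ (d : ℝ)^(N/2) + 1) :=
  stmt_17_general N hN r hr0
end
end

section
/- Let φ_1,…,φ_m be a 2-design of unit vectors in ℂ^{d_A}⊗ℂ^{d_B}. Then the average squared Schmidt coefficient sum (purity of reduction to A) equals (d_A + d_B)/(d_A d_B + 1); in particular it is strictly greater than 1/d_A and strictly less than 1 whenever d_A, d_B ≥ 2. -/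
/-!
The purity `Tr[(Tr_B ρ)²]` equals `Tr[(ρ ⊗ ρ)(SWAP_A ⊗ 1_B)]`, which is linear in `ρ ⊗ ρ`.
Averaging over a 2-design therefore replaces `ρ ⊗ ρ` by `(1 + SWAP)/(D(D+1))`, `D = d_A d_B`,
and `Tr[SWAP_A ⊗ 1_B] = d_A d_B²`, `Tr[SWAP (SWAP_A ⊗ 1_B)] = Tr[1_A ⊗ SWAP_B] = d_A² d_B`.
-/

open Matrix BigOperators Finset Kronecker
open scoped ComplexOrder

noncomputable section

/-- Partial trace over the second factor. -/
def redA {a b : Type*} [Fintype b] (M : Matrix (a × b) (a × b) ℂ) : Matrix a a ℂ :=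
  Matrix.of fun x y => ∑ z, M (x, z) (y, z)

variable {a b : Type*} [Fintype a] [Fintype b]

-- Under the ordering `(a × b) × (a × b)` of `ℂ^a ⊗ ℂ^b ⊗ ℂ^a ⊗ ℂ^b`, this is `Tr[X (SWAP_A ⊗ 1_B)]`.
def traceSwapA : Matrix ((a × b) × (a × b)) ((a × b) × (a × b)) ℂ →ₗ[ℂ] ℂ where
  toFun X := ∑ x, ∑ y, ∑ z, ∑ w, X ((x, z), (y, w)) ((y, z), (x, w))
  map_add' X Y := by simp only [Matrix.add_apply, sum_add_distrib]
  map_smul' c X := by simp only [Matrix.smul_apply, smul_eq_mul, mul_sum, RingHom.id_apply]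

lemma trace_redA_mul_redA (M N : Matrix (a × b) (a × b) ℂ) :
    (redA M * redA N).trace = traceSwapA (M ⊗ₖ N) := by
  simp only [traceSwapA, LinearMap.coe_mk, AddHom.coe_mk, kroneckerMap_apply, trace, diag_apply,
    mul_apply, redA, of_apply, sum_mul_sum]

variable [DecidableEq a] [DecidableEq b]

lemma traceSwapA_one :
    traceSwapA (1 : Matrix ((a × b) × (a × b)) ((a × b) × (a × b)) ℂ)
      = Fintype.card a * Fintype.card b ^ 2 := by
  simp [traceSwapA, one_apply, sq, and_iff_left_of_imp Eq.symm]

lemma traceSwapA_swapM :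
    traceSwapA (swapM (a × b)) = Fintype.card a ^ 2 * Fintype.card b := by
  simp [traceSwapA, swapM, sq, mul_assoc, and_iff_left_of_imp Eq.symm]

theorem TwoDesign.average_purity [Nonempty a] [Nonempty b] {m : ℕ} {φ : Fin m → a × b → ℂ}
    (hdes : TwoDesign φ) :
    (1 / (m : ℂ)) * ∑ j, (redA (proj (φ j)) * redA (proj (φ j))).trace
      = (Fintype.card a + Fintype.card b) / (Fintype.card a * Fintype.card b + 1) := by
  have hA : (Fintype.card a : ℂ) ≠ 0 := Nat.cast_ne_zero.2 Fintype.card_ne_zero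
  have hB : (Fintype.card b : ℂ) ≠ 0 := Nat.cast_ne_zero.2 Fintype.card_ne_zero
  have h := congrArg traceSwapA hdes
  simp only [map_smul, map_sum, map_add, smul_eq_mul, traceSwapA_one, traceSwapA_swapM,
    Fintype.card_prod, Nat.cast_mul] at h
  simp only [trace_redA_mul_redA, h]
  field_simp
  ring

lemma one_div_lt_lubkin {x y : ℝ} (hx : 1 < x) (hy : 0 ≤ y) : 1 / x < (x + y) / (x * y + 1) := by
  rw [div_lt_div_iff₀ (by linarith) (by nlinarith)]
  nlinarith

lemma lubkin_lt_one {x y : ℝ} (hx : 1 < x) (hy : 1 < y) : (x + y) / (x * y + 1) < 1 := by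
  rw [div_lt_one (by nlinarith)]
  nlinarith

theorem stmt_18_general (dA dB m : ℕ) (hA : 1 ≤ dA) (hB : 1 ≤ dB)
    (φ : Fin m → (Fin dA × Fin dB) → ℂ)
    (hdes : TwoDesign φ) :
    ((1/(m : ℂ)) * ∑ j, (redA (proj (φ j)) * redA (proj (φ j))).trace
        = ((dA : ℂ) + (dB : ℂ)) / ((dA : ℂ) * (dB : ℂ) + 1))
    ∧ (2 ≤ dA → 2 ≤ dB →
        1/(dA : ℝ) < ((dA : ℝ) + (dB : ℝ))/((dA : ℝ) * (dB : ℝ) + 1)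
        ∧ ((dA : ℝ) + (dB : ℝ))/((dA : ℝ) * (dB : ℝ) + 1) < 1) := by
  have : NeZero dA := ⟨by omega⟩
  have : NeZero dB := ⟨by omega⟩
  refine ⟨by simpa using hdes.average_purity, fun h2A h2B => ?_⟩
  have hA' : (1 : ℝ) < dA := by exact_mod_cast h2A
  have hB' : (1 : ℝ) < dB := by exact_mod_cast h2B
  exact ⟨one_div_lt_lubkin hA' (Nat.cast_nonneg dB), lubkin_lt_one hA' hB'⟩

/-- For a bipartite 2-design the average purity of the `A`-reduction equals
`(d_A + d_B)/(d_A d_B + 1)`, which lies strictly between `1/d_A` and `1` for `d_A, d_B ≥ 2`. -/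
theorem stmt_18 (dA dB m : ℕ) (hA : 1 ≤ dA) (hB : 1 ≤ dB) (hm : 0 < m)
    (φ : Fin m → (Fin dA × Fin dB) → ℂ) (hunit : ∀ j, inner' (φ j) (φ j) = 1)
    (hdes : TwoDesign φ) :
    ((1/(m : ℂ)) * ∑ j, (redA (proj (φ j)) * redA (proj (φ j))).trace
        = ((dA : ℂ) + (dB : ℂ)) / ((dA : ℂ) * (dB : ℂ) + 1))
    ∧ (2 ≤ dA → 2 ≤ dB →
        1/(dA : ℝ) < ((dA : ℝ) + (dB : ℝ))/((dA : ℝ) * (dB : ℝ) + 1)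
        ∧ ((dA : ℝ) + (dB : ℝ))/((dA : ℝ) * (dB : ℝ) + 1) < 1) :=
  stmt_18_general dA dB m hA hB φ hdes
end
end

section
/- If unit vectors φ_1,…,φ_m ∈ ℂ^{d_A}⊗ℂ^{d_B} (d_A, d_B ≥ 2) form a complex projective 2-design, then not all φ_j can be product states v_j ⊗ w_j. -/
open Matrix BigOperators Finset Kronecker
open scoped ComplexOrder

noncomputable section

/-- Interchanging a `Fin m` sum past four nested sums. -/
lemma sum_interchange {dA dB m : ℕ} (F : Fin m → Fin dA → Fin dA → Fin dB → Fin dB → ℂ) :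
    (∑ a1 : Fin dA, ∑ a2 : Fin dA, ∑ b1 : Fin dB, ∑ b2 : Fin dB, ∑ j, F j a1 a2 b1 b2)
    = ∑ j, ∑ a1, ∑ a2, ∑ b1, ∑ b2, F j a1 a2 b1 b2 := by
  have s4 : ∀ a1 a2 b1, (∑ b2 : Fin dB, ∑ j, F j a1 a2 b1 b2) = ∑ j, ∑ b2, F j a1 a2 b1 b2 :=
    fun _ _ _ => Finset.sum_comm
  have s3 : ∀ a1 a2, (∑ b1 : Fin dB, ∑ j, ∑ b2, F j a1 a2 b1 b2) = ∑ j, ∑ b1, ∑ b2, F j a1 a2 b1 b2 :=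
    fun _ _ => Finset.sum_comm
  have s2 : ∀ a1, (∑ a2 : Fin dA, ∑ j, ∑ b1, ∑ b2, F j a1 a2 b1 b2) = ∑ j, ∑ a2, ∑ b1, ∑ b2, F j a1 a2 b1 b2 :=
    fun _ => Finset.sum_comm
  simp only [s4, s3, s2]
  exact Finset.sum_comm

/-- The A-swap contraction of the two-fold tensor power of a product state is 1. -/
lemma contract_prod {dA dB : ℕ} (v : Fin dA → ℂ) (w : Fin dB → ℂ)
    (h : (∑ p : Fin dA × Fin dB, star (v p.1 * w p.2) * (v p.1 * w p.2)) = 1) :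
    ∑ a1 : Fin dA, ∑ a2 : Fin dA, ∑ b1 : Fin dB, ∑ b2 : Fin dB,
      (v a1 * w b1 * star (v a2 * w b1)) * (v a2 * w b2 * star (v a1 * w b2)) = 1 := by
  have hAB : (∑ a, v a * star (v a)) * (∑ b, w b * star (w b)) = 1 := by
    rw [Fintype.sum_prod_type] at h
    rw [← h]
    simp only [Finset.sum_mul, Finset.mul_sum]
    rw [Finset.sum_comm]
    apply Finset.sum_congr rfl
    intro a _
    apply Finset.sum_congr rfl
    intro b _
    simp [star_mul']; ring
  calc ∑ a1 : Fin dA, ∑ a2 : Fin dA, ∑ b1 : Fin dB, ∑ b2 : Fin dB,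
      (v a1 * w b1 * star (v a2 * w b1)) * (v a2 * w b2 * star (v a1 * w b2))
      = ∑ a1 : Fin dA, ∑ a2 : Fin dA, ∑ b1 : Fin dB, ∑ b2 : Fin dB,
        (v a1 * star (v a1)) * (v a2 * star (v a2)) * (w b1 * star (w b1)) * (w b2 * star (w b2)) := by
        refine Finset.sum_congr rfl fun a1 _ => Finset.sum_congr rfl fun a2 _ =>
          Finset.sum_congr rfl fun b1 _ => Finset.sum_congr rfl fun b2 _ => ?_
        simp [star_mul']; ring
    _ = (∑ a, v a * star (v a)) * (∑ a, v a * star (v a)) * (∑ b, w b * star (w b)) * (∑ b, w b * star (w b)) := by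
        simp only [← Finset.sum_mul, ← Finset.mul_sum]
    _ = 1 := by
        rw [show (∑ a, v a * star (v a)) * (∑ a, v a * star (v a)) * (∑ b, w b * star (w b)) * (∑ b, w b * star (w b))
          = ((∑ a, v a * star (v a)) * (∑ b, w b * star (w b))) * ((∑ a, v a * star (v a)) * (∑ b, w b * star (w b))) by ring,
          hAB, one_mul]

/-- The bipartite core of Proposition 2: a complex projective 2-design in `ℂ^{d_A} ⊗ ℂ^{d_B}`
(`d_A, d_B ≥ 2`) cannot consist entirely of product states. -/
theorem stmt_19 (dA dB m : ℕ) (hA : 2 ≤ dA) (hB : 2 ≤ dB) (hm : 0 < m)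
    (φ : Fin m → (Fin dA × Fin dB) → ℂ) (hunit : ∀ j, inner' (φ j) (φ j) = 1)
    (hdes : TwoDesign φ) :
    ¬ (∀ j, ∃ (v : Fin dA → ℂ) (w : Fin dB → ℂ), ∀ p, φ j p = v p.1 * w p.2) := by
  intro h
  have key := congrArg (fun M : Matrix ((Fin dA × Fin dB) × (Fin dA × Fin dB)) ((Fin dA × Fin dB) × (Fin dA × Fin dB)) ℂ =>
    ∑ a1 : Fin dA, ∑ a2 : Fin dA, ∑ b1 : Fin dB, ∑ b2 : Fin dB,
      M ((a1,b1),(a2,b2)) ((a2,b1),(a1,b2))) hdes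
  -- LHS = 1 (average reduction purity of product states)
  have hL : (∑ a1 : Fin dA, ∑ a2 : Fin dA, ∑ b1 : Fin dB, ∑ b2 : Fin dB,
      ((1/(m:ℂ)) • ∑ j, (proj (φ j)) ⊗ₖ (proj (φ j))) ((a1,b1),(a2,b2)) ((a2,b1),(a1,b2))) = 1 := by
    simp only [Matrix.smul_apply, Matrix.sum_apply, Matrix.kroneckerMap_apply, smul_eq_mul]
    simp only [← Finset.mul_sum]
    rw [sum_interchange (fun j a1 a2 b1 b2 => proj (φ j) (a1,b1) (a2,b1) * proj (φ j) (a2,b2) (a1,b2))]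
    have hone : ∀ j : Fin m, (∑ a1 : Fin dA, ∑ a2 : Fin dA, ∑ b1 : Fin dB, ∑ b2 : Fin dB,
        proj (φ j) (a1,b1) (a2,b1) * proj (φ j) (a2,b2) (a1,b2)) = 1 := by
      intro j
      obtain ⟨v, w, hvw⟩ := h j
      have hu := hunit j
      simp only [inner', hvw] at hu
      simp only [proj, Matrix.of_apply, hvw]
      exact contract_prod v w hu
    rw [Finset.sum_congr rfl (fun j _ => hone j), Finset.sum_const, Finset.card_univ, Fintype.card_fin,
      nsmul_eq_mul, mul_one]
    rw [one_div, inv_mul_cancel₀]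
    exact_mod_cast hm.ne'
  -- RHS value
  have hR : (∑ a1 : Fin dA, ∑ a2 : Fin dA, ∑ b1 : Fin dB, ∑ b2 : Fin dB,
      ((1/((Fintype.card (Fin dA × Fin dB) : ℂ) * (Fintype.card (Fin dA × Fin dB) + 1))) • (1 + swapM (Fin dA × Fin dB))) ((a1,b1),(a2,b2)) ((a2,b1),(a1,b2)))
      = (1/(((dA:ℂ)*dB) * ((dA:ℂ)*dB + 1))) * ((dA:ℂ)*dB*dB + (dA:ℂ)*dA*dB) := by
    have e1 : ∀ (a1 a2 : Fin dA) (b1 b2 : Fin dB),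
        (if (((a1,b1),(a2,b2)) : (Fin dA × Fin dB) × (Fin dA × Fin dB)) = ((a2,b1),(a1,b2)) then (1:ℂ) else 0)
        = if a1 = a2 then 1 else 0 := by
      intro a1 a2 b1 b2
      by_cases hc : a1 = a2 <;> simp [hc, Prod.ext_iff]
    have e2 : ∀ (a1 a2 : Fin dA) (b1 b2 : Fin dB),
        (if (((a1,b1) : Fin dA × Fin dB) = (a1,b2) ∧ ((a2,b2) : Fin dA × Fin dB) = (a2,b1)) then (1:ℂ) else 0)
        = if b1 = b2 then 1 else 0 := by
      intro a1 a2 b1 b2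
      by_cases hc : b1 = b2 <;> simp [hc, Prod.ext_iff]
    simp only [Matrix.smul_apply, Matrix.add_apply, Matrix.one_apply, swapM, Matrix.of_apply,
      smul_eq_mul, Fintype.card_prod, Fintype.card_fin, e1, e2, mul_add, mul_ite, mul_one, mul_zero,
      Finset.sum_add_distrib, Finset.sum_ite_eq, Finset.mem_univ, if_true, Finset.sum_const,
      Finset.card_univ, nsmul_eq_mul]
    push_cast; ring
  rw [hL, hR] at key
  -- numeric contradiction: dA·dB·(dA·dB+1) = dA·dB·(dA+dB) forces (dA-1)(dB-1) = 0
  have hD : ((dA:ℂ)*dB) * ((dA:ℂ)*dB + 1) ≠ 0 := by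
    have h1 : (dA:ℂ) ≠ 0 := by exact_mod_cast (by omega : dA ≠ 0)
    have h2 : (dB:ℂ) ≠ 0 := by exact_mod_cast (by omega : dB ≠ 0)
    have h3 : ((dA:ℂ)*dB + 1) ≠ 0 := by
      intro hc
      have : ((dA*dB + 1 : ℕ) : ℂ) = 0 := by push_cast; linear_combination hc
      exact_mod_cast this
    exact mul_ne_zero (mul_ne_zero h1 h2) h3
  rw [one_div, eq_comm, inv_mul_eq_iff_eq_mul₀ hD, mul_one] at key
  have hnat : dA*dB*dB + dA*dA*dB = dA*dB*(dA*dB+1) := by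
    have : ((dA*dB*dB + dA*dA*dB : ℕ) : ℂ) = ((dA*dB*(dA*dB+1) : ℕ) : ℂ) := by
      push_cast; linear_combination key
    exact_mod_cast this
  have hpos : 0 < dA * dB := by positivity
  have h3 : dA * dB * (dB + dA) = dA * dB * (dA * dB + 1) := by
    rw [← hnat]; ring
  have h2 : dB + dA = dA * dB + 1 := Nat.eq_of_mul_eq_mul_left hpos h3
  have hZ : (dB:ℤ) + dA = (dA:ℤ) * dB + 1 := by exact_mod_cast h2
  have hAZ : (2:ℤ) ≤ dA := by exact_mod_cast hA
  have hBZ : (2:ℤ) ≤ dB := by exact_mod_cast hB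
  nlinarith [hZ, hAZ, hBZ, mul_nonneg (sub_nonneg.2 hAZ) (sub_nonneg.2 hBZ)]
end
end
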